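/- arXiv:1010.4370 — 2 statements merged into one kernel-verified Lean document; each statement's English description precedes it below -/
import Mathlib

section
/- For an invertible complex n×n matrix Z+iI and Z'+iI invertible, with Cayley transform C(Z) = (Z-iI)(Z+iI)^{-1}, one has I - C(Z)·conj(C(Z')) = ((Z+iI)/(2i))^{-1} · ((Z - conj(Z'))/(2i)) · conj(((Z'+iI)/(2i)))^{-1}, where conj denotes entrywise complex conjugation. -/
/-!
With `P = (Z + iI)⁻¹` and `Q = (conj Z' - iI)⁻¹` one has `C(Z) = 1 - 2i P` and
`conj (C Z') = 1 + 2i Q`, so `1 - C(Z) conj (C Z') = 2i (P - Q + 2i P Q)`. Since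
`P - Q + 2i P Q = P ((conj Z' - iI) - (Z + iI) + 2i) Q = P (conj Z' - Z) Q`, the left side is
`-2i P (Z - conj Z') Q`, and the scalars `(2i)⁻¹` on the right combine to `conj (2i) = -2i`.
-/

open Matrix

/-- The Cayley transform `C(Z) = (Z - iI)(Z + iI)⁻¹`. -/
noncomputable def cayley {n : ℕ} (Z : Matrix (Fin n) (Fin n) ℂ) : Matrix (Fin n) (Fin n) ℂ :=
  (Z - Complex.I • 1) * (Z + Complex.I • 1)⁻¹

namespace Matrix

section Map

variable {n R S : Type*} [DecidableEq n] [Ring R] [Ring S]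

theorem map_add_smul_one (f : R →+* S) (M : Matrix n n R) (s : R) :
    (M + s • 1).map f = M.map f + f s • 1 := by
  rw [Matrix.map_add _ (map_add f), map_smul' _ _ _ (map_mul f),
    Matrix.map_one _ (map_zero f) (map_one f)]

theorem map_sub_smul_one (f : R →+* S) (M : Matrix n n R) (s : R) :
    (M - s • 1).map f = M.map f - f s • 1 := by
  rw [Matrix.map_sub _ (map_sub f), map_smul' _ _ _ (map_mul f),
    Matrix.map_one _ (map_zero f) (map_one f)]

end Map

variable {n R S : Type*} [Fintype n] [DecidableEq n] [CommRing R] [CommRing S]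

theorem map_nonsing_inv (f : R →+* S) {M : Matrix n n R} (hM : IsUnit M) :
    M⁻¹.map f = (M.map f)⁻¹ := by
  refine (inv_eq_right_inv ?_).symm
  rw [← RingHom.mapMatrix_apply, ← RingHom.mapMatrix_apply, ← map_mul,
    mul_nonsing_inv _ ((isUnit_iff_isUnit_det M).mp hM), map_one]

theorem inv_smul_of_ne_zero {K : Type*} [Field K] {k : K} (hk : k ≠ 0) {M : Matrix n n K}
    (hM : IsUnit M) : (k • M)⁻¹ = k⁻¹ • M⁻¹ :=
  Matrix.inv_smul' M (Units.mk0 k hk) ((isUnit_iff_isUnit_det M).mp hM)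

theorem sub_smul_one_mul_nonsing_inv {M : Matrix n n R} (hM : IsUnit M) (t : R) :
    (M - t • 1) * M⁻¹ = 1 - t • M⁻¹ := by
  rw [Matrix.sub_mul, mul_nonsing_inv _ ((isUnit_iff_isUnit_det M).mp hM), smul_mul,
    Matrix.one_mul]

theorem one_sub_sub_mul_inv_mul_add_mul_inv {A B : Matrix n n R} {s : R}
    (hA : IsUnit (A + s • 1)) (hB : IsUnit (B - s • 1)) :
    1 - (A - s • 1) * (A + s • 1)⁻¹ * ((B + s • 1) * (B - s • 1)⁻¹)
      = (2 * s) • ((A + s • 1)⁻¹ * (B - A) * (B - s • 1)⁻¹) := by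
  have hA' : A - s • 1 = (A + s • 1) - (2 * s) • 1 := by module
  have hB' : B + s • 1 = (B - s • 1) - (-(2 * s)) • 1 := by module
  have hBA : B - A = (B - s • 1) - (A + s • 1) + (2 * s) • 1 := by module
  rw [hA', hB', sub_smul_one_mul_nonsing_inv hA, sub_smul_one_mul_nonsing_inv hB, hBA]
  set P := (A + s • 1)⁻¹
  set Q := (B - s • 1)⁻¹
  have hP : P * (A + s • 1) = 1 := nonsing_inv_mul _ ((isUnit_iff_isUnit_det _).mp hA)
  have hQ : (B - s • 1) * Q = 1 := mul_nonsing_inv _ ((isUnit_iff_isUnit_det _).mp hB)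
  have hPQ : P * ((B - s • 1) - (A + s • 1) + (2 * s) • 1) * Q
      = P - Q + (2 * s) • (P * Q) := by
    rw [Matrix.mul_add, Matrix.mul_sub, Matrix.add_mul, Matrix.sub_mul, Matrix.mul_assoc P, hQ,
      hP, Matrix.one_mul, Matrix.mul_smul, Matrix.mul_one, Matrix.smul_mul]
  rw [hPQ]
  simp only [Matrix.sub_mul, Matrix.mul_sub, Matrix.smul_mul, Matrix.mul_smul, Matrix.one_mul,
    Matrix.mul_one]
  module

end Matrix

open Complex in
theorem cayley_identity (n : ℕ) (Z Z' : Matrix (Fin n) (Fin n) ℂ)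
    (hZ : IsUnit (Z + Complex.I • 1)) (hZ' : IsUnit (Z' + Complex.I • 1)) :
    (1 : Matrix (Fin n) (Fin n) ℂ) - cayley Z * (cayley Z').map (starRingEnd ℂ)
      = ((2 * Complex.I)⁻¹ • (Z + Complex.I • 1))⁻¹
        * ((2 * Complex.I)⁻¹ • (Z - Z'.map (starRingEnd ℂ)))
        * (((2 * Complex.I)⁻¹ • (Z' + Complex.I • 1)).map (starRingEnd ℂ))⁻¹ := by
  set W := Z'.map (starRingEnd ℂ)
  have hconj : (Z' + I • 1).map (starRingEnd ℂ) = W - I • 1 := by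
    rw [map_add_smul_one, conj_I, neg_smul, ← sub_eq_add_neg]
  have hW : IsUnit (W - I • 1) := hconj ▸ hZ'.map (starRingEnd ℂ).mapMatrix
  have hcayley' : (cayley Z').map (starRingEnd ℂ) = (W + I • 1) * (W - I • 1)⁻¹ := by
    rw [cayley, ← RingHom.mapMatrix_apply, map_mul, RingHom.mapMatrix_apply,
      RingHom.mapMatrix_apply, map_nonsing_inv _ hZ', hconj, map_sub_smul_one, conj_I,
      neg_smul, sub_neg_eq_add]
  have h2I : 2 * I ≠ 0 := by simp
  have hconj2I : starRingEnd ℂ (2 * I)⁻¹ = -(2 * I)⁻¹ := by simp [conj_ofNat]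
  rw [cayley, hcayley', one_sub_sub_mul_inv_mul_add_mul_inv hZ hW,
    inv_smul_of_ne_zero (inv_ne_zero h2I) hZ, map_smul' _ _ _ (map_mul _), hconj, hconj2I,
    inv_smul_of_ne_zero (neg_ne_zero.2 (inv_ne_zero h2I)) hW]
  simp only [Matrix.smul_mul, Matrix.mul_smul, smul_smul]
  rw [inv_neg, inv_inv, inv_mul_cancel₀ h2I, mul_one, ← neg_sub W Z, Matrix.mul_neg,
    Matrix.neg_mul, neg_smul, smul_neg, neg_neg]
end

section
/- Taking determinants in the Cayley identity: det(I - C(Z)·conj(C(Z'))) = det((Z - conj(Z'))/(2i)) / ( det((Z+iI)/(2i)) · conj(det((Z'+iI)/(2i))) ), whenever Z+iI and Z'+iI are invertible. -/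
/-!
With `A = Z + iI` and `A' = conj Z' - iI`, the matrix `A` commutes with `Z - iI` and
`conj (C Z') * A' = conj Z' + iI`, so `A (1 - C(Z) conj(C Z')) A'` collapses to
`(Z + iI)(conj Z' - iI) - (Z - iI)(conj Z' + iI) = -2i (Z - conj Z')`.
Taking determinants, and using `conj (2i)⁻¹ = (-2i)⁻¹`, gives the identity.
-/

open Matrix

namespace Matrix

variable {ι K : Type*} [DecidableEq ι]

theorem map_add_smul_one_s1 {R S : Type*} [Semiring R] [Semiring S] (f : R →+* S)
    (Z : Matrix ι ι R) (c : R) : (Z + c • 1).map f = Z.map f + f c • 1 := by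
  rw [Matrix.map_add _ (map_add f), map_smul' f c 1 (map_mul f),
    Matrix.map_one f (map_zero f) (map_one f)]

variable [Fintype ι] [CommRing K] (Z W : Matrix ι ι K) (μ : K)

theorem add_smul_one_mul_sub_smul_one_mul_inv (hZ : IsUnit (Z + μ • 1)) :
    (Z + μ • 1) * ((Z - μ • 1) * (Z + μ • 1)⁻¹) = Z - μ • 1 := by
  have hcomm : (Z + μ • 1) * (Z - μ • 1) = (Z - μ • 1) * (Z + μ • 1) := by
    simp only [mul_add, add_mul, mul_sub, sub_mul, Matrix.mul_smul, Matrix.smul_mul, mul_one,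
      one_mul]
    abel
  rw [← mul_assoc, hcomm, mul_nonsing_inv_cancel_right _ _ ((isUnit_iff_isUnit_det _).mp hZ)]

theorem add_smul_one_mul_sub_sub_smul_one_mul_add :
    (Z + μ • 1) * (W - μ • 1) - (Z - μ • 1) * (W + μ • 1) = (-2 * μ) • (Z - W) := by
  simp only [mul_add, add_mul, mul_sub, sub_mul, Matrix.mul_smul, Matrix.smul_mul, mul_one, one_mul]
  module

/-- `X` plays the role of the Cayley transform `(W + μ)(W - μ)⁻¹`; it enters only through `hX`,
so that no inverse of an entrywise conjugated matrix has to be computed. -/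
theorem add_smul_one_mul_one_sub_mul_mul (hZ : IsUnit (Z + μ • 1)) {X : Matrix ι ι K}
    (hX : X * (W - μ • 1) = W + μ • 1) :
    (Z + μ • 1) * (1 - (Z - μ • 1) * (Z + μ • 1)⁻¹ * X) * (W - μ • 1)
      = (-2 * μ) • (Z - W) := by
  have expand : ∀ a x y c : Matrix ι ι K, a * (1 - x * y) * c = a * c - a * x * (y * c) :=
    fun _ _ _ _ => by noncomm_ring
  rw [expand, add_smul_one_mul_sub_smul_one_mul_inv Z μ hZ, hX,
    add_smul_one_mul_sub_sub_smul_one_mul_add]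

theorem det_add_smul_one_mul_det_one_sub_mul_mul (hZ : IsUnit (Z + μ • 1)) {X : Matrix ι ι K}
    (hX : X * (W - μ • 1) = W + μ • 1) :
    (Z + μ • 1).det * (1 - (Z - μ • 1) * (Z + μ • 1)⁻¹ * X).det * (W - μ • 1).det
      = (-2 * μ) ^ Fintype.card ι * (Z - W).det := by
  rw [← det_mul, ← det_mul, add_smul_one_mul_one_sub_mul_mul Z W μ hZ hX, det_smul]

end Matrix

open Complex in
theorem map_conj_add_I_smul_one {n : ℕ} (Z : Matrix (Fin n) (Fin n) ℂ) :
    (Z + I • 1).map (starRingEnd ℂ) = Z.map (starRingEnd ℂ) - I • 1 := by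
  rw [map_add_smul_one_s1, conj_I, neg_smul, sub_eq_add_neg]

open Complex in
theorem map_conj_sub_I_smul_one {n : ℕ} (Z : Matrix (Fin n) (Fin n) ℂ) :
    (Z - I • 1).map (starRingEnd ℂ) = Z.map (starRingEnd ℂ) + I • 1 := by
  rw [sub_eq_add_neg, ← neg_smul, map_add_smul_one_s1, map_neg, conj_I, neg_neg]

open Complex in
theorem map_conj_cayley_mul {n : ℕ} (Z : Matrix (Fin n) (Fin n) ℂ) (hZ : IsUnit (Z + I • 1)) :
    (cayley Z).map (starRingEnd ℂ) * (Z.map (starRingEnd ℂ) - I • 1)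
      = Z.map (starRingEnd ℂ) + I • 1 := by
  rw [← map_conj_add_I_smul_one, ← map_conj_sub_I_smul_one, cayley, ← Matrix.map_mul,
    nonsing_inv_mul_cancel_right _ _ ((isUnit_iff_isUnit_det _).mp hZ)]

theorem det_cayley_identity (n : ℕ) (Z Z' : Matrix (Fin n) (Fin n) ℂ)
    (hZ : IsUnit (Z + Complex.I • 1)) (hZ' : IsUnit (Z' + Complex.I • 1)) :
    ((1 : Matrix (Fin n) (Fin n) ℂ) - cayley Z * (cayley Z').map (starRingEnd ℂ)).det
      = ((2 * Complex.I)⁻¹ • (Z - Z'.map (starRingEnd ℂ))).det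
        / (((2 * Complex.I)⁻¹ • (Z + Complex.I • 1)).det
            * (starRingEnd ℂ) (((2 * Complex.I)⁻¹ • (Z' + Complex.I • 1)).det)) := by
  set W := Z'.map (starRingEnd ℂ)
  have key := det_add_smul_one_mul_det_one_sub_mul_mul Z W Complex.I hZ (map_conj_cayley_mul Z' hZ')
  rw [Fintype.card_fin] at key
  have hconj : (starRingEnd ℂ) (Z' + Complex.I • 1).det = (W - Complex.I • 1).det := by
    rw [RingHom.map_det, RingHom.mapMatrix_apply, map_conj_add_I_smul_one]
  have hA : (Z + Complex.I • 1).det ≠ 0 := ((isUnit_iff_isUnit_det _).mp hZ).ne_zero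
  have hA' : (W - Complex.I • 1).det ≠ 0 := by
    rw [← hconj]; exact (map_ne_zero _).mpr ((isUnit_iff_isUnit_det _).mp hZ').ne_zero
  simp only [det_smul, Fintype.card_fin, map_mul, map_pow, map_inv₀, map_ofNat, Complex.conj_I,
    hconj]
  rw [cayley, mul_neg, ← neg_mul, inv_pow, inv_pow]
  field_simp
  linear_combination key
end
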